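/- For δ ∈ (0,1), the critical points of G_δ satisfy c₋(δ) < -1 < c₊(δ) < 0, and G_δ(c₊(δ)) = -(c₊(δ))³ ∈ (0,1). -/
import Mathlib


open Filter Topology

noncomputable def Gr (δ x : ℝ) : ℝ :=
  x ^ 2 * (x ^ 2 + 2 * x + (1 - δ)) / ((1 - δ) * x ^ 2 + 2 * x + 1)

theorem Gdelta_real_critical_points (δ : ℝ) (hδ : δ ∈ Set.Ioo (0 : ℝ) 1)
    (s cP cM : ℝ) (hs : s = Real.sqrt ((2 + δ) ^ 2 - 4 * (1 - δ) ^ 2))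
    (hcP : cP = (-(2 + δ) + s) / (2 * (1 - δ)))
    (hcM : cM = (-(2 + δ) - s) / (2 * (1 - δ))) :
    cM < -1 ∧ -1 < cP ∧ cP < 0 ∧ Gr δ cP = -cP ^ 3 ∧ 0 < -cP ^ 3 ∧ -cP ^ 3 < 1 := by
  obtain ⟨hδ0, hδ1⟩ := hδ
  have h1δ : (0:ℝ) < 1 - δ := by linarith
  have hnn : (0:ℝ) ≤ (2 + δ) ^ 2 - 4 * (1 - δ) ^ 2 := by nlinarith
  have hs0 : 0 ≤ s := hs ▸ Real.sqrt_nonneg _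
  have hs2 : s ^ 2 = (2 + δ) ^ 2 - 4 * (1 - δ) ^ 2 := by
    rw [hs, Real.sq_sqrt hnn]
  have hs3 : 3 * δ < s := by nlinarith
  have hslt : s < 2 + δ := by nlinarith
  have hcPgt : -1 < cP := by
    rw [hcP, lt_div_iff₀ (by linarith : (0:ℝ) < 2 * (1 - δ))]
    linarith
  have hcPlt : cP < 0 := by
    rw [hcP]
    apply div_neg_of_neg_of_pos <;> linarith
  have hcM1 : cM < -1 := by
    rw [hcM, div_lt_iff₀ (by linarith : (0:ℝ) < 2 * (1 - δ))]
    linarith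
  have hquad : (1 - δ) * cP ^ 2 + (2 + δ) * cP + (1 - δ) = 0 := by
    have h : 2 * (1 - δ) * cP = -(2 + δ) + s := by
      rw [hcP]; field_simp
    nlinarith [hs2, h]
  have hden : (1 - δ) * cP ^ 2 + 2 * cP + 1 = δ * (1 - cP) := by linarith
  have hdenne : (1 - δ) * cP ^ 2 + 2 * cP + 1 ≠ 0 := by
    have h : 0 < δ * (1 - cP) := by nlinarith
    rw [hden]; exact h.ne'
  have hG : Gr δ cP = -cP ^ 3 := by
    rw [Gr, div_eq_iff hdenne]
    linear_combination (cP ^ 2 * (cP + 1)) * hquad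
  have hc3 : (0:ℝ) < (-cP) ^ 3 := pow_pos (by linarith) 3
  refine ⟨hcM1, hcPgt, hcPlt, hG, by nlinarith, by nlinarith⟩
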